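/- arXiv:1905.03468 — 7 statements merged into one kernel-verified Lean document; each statement's English description precedes it below -/
import Mathlib

section
/- Let L be an N×N real matrix with 1^T L = 0 and L·1 = 0 and η^T L η ≥ 0 for all η ∈ ℝ^N (the Laplacian of a weight-balanced graph), and let M be an N×N diagonal matrix with strictly positive diagonal entries. Then every complex eigenvalue of the product L·M has nonnegative real part. -/
/-! If `L D v = s v` with `v ≠ 0`, put `w = D v`. Then `w* L w = s · w* v = s ∑ dᵢ |vᵢ|²`, while
`Re (w* L w)` is the sum of the real quadratic forms of `Re w` and `Im w`, hence nonnegative. -/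

open Matrix

namespace Matrix

variable {n : Type*} [Fintype n]

theorem re_star_dotProduct_map_ofReal_mulVec (A : Matrix n n ℝ) (w : n → ℂ) :
    (star w ⬝ᵥ A.map (↑) *ᵥ w).re =
      (fun i => (w i).re) ⬝ᵥ A *ᵥ (fun i => (w i).re) +
        (fun i => (w i).im) ⬝ᵥ A *ᵥ (fun i => (w i).im) := by
  simp only [dotProduct, mulVec, Pi.star_apply, map_apply, Complex.re_sum, Finset.mul_sum,
    ← Finset.sum_add_distrib]
  refine Finset.sum_congr rfl fun i _ => Finset.sum_congr rfl fun j _ => ?_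
  simp only [RCLike.star_def, Complex.mul_re, Complex.mul_im, Complex.conj_re, Complex.conj_im,
    Complex.ofReal_re, Complex.ofReal_im]
  ring

theorem star_diagonal_ofReal_mulVec_dotProduct [DecidableEq n] (d : n → ℝ) (v : n → ℂ) :
    star (diagonal (fun i => (d i : ℂ)) *ᵥ v) ⬝ᵥ v = ↑(∑ i, d i * Complex.normSq (v i)) := by
  simp only [mulVec_diagonal, dotProduct, Pi.star_apply, star_mul', Complex.star_def,
    Complex.conj_ofReal, Complex.ofReal_sum, Complex.ofReal_mul, Complex.normSq_eq_conj_mul_self,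
    mul_assoc]

theorem sum_mul_normSq_pos {d : n → ℝ} (hd : ∀ i, 0 < d i) {v : n → ℂ} (hv : v ≠ 0) :
    0 < ∑ i, d i * Complex.normSq (v i) := by
  obtain ⟨i, hi⟩ := Function.ne_iff.mp hv
  exact Finset.sum_pos' (fun j _ => mul_nonneg (hd j).le (Complex.normSq_nonneg _))
    ⟨i, Finset.mem_univ i, mul_pos (hd i) (Complex.normSq_pos.mpr hi)⟩

theorem exists_mulVec_eq_smul_of_mem_spectrum {K : Type*} [Field K] [DecidableEq n]
    {A : Matrix n n K} {s : K} (hs : s ∈ spectrum K A) : ∃ v ≠ 0, A *ᵥ v = s • v := by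
  rw [← spectrum_toLin', ← Module.End.hasEigenvalue_iff_mem_spectrum] at hs
  obtain ⟨v, hv⟩ := hs.exists_hasEigenvector
  exact ⟨v, hv.2, hv.apply_eq_smul⟩

theorem re_nonneg_of_mem_spectrum_mul_diagonal [DecidableEq n] {B : Matrix n n ℂ}
    (hB : ∀ w, 0 ≤ (star w ⬝ᵥ B *ᵥ w).re) {d : n → ℝ} (hd : ∀ i, 0 < d i) {s : ℂ}
    (hs : s ∈ spectrum ℂ (B * diagonal (fun i => (d i : ℂ)))) : 0 ≤ s.re := by
  obtain ⟨v, hv0, hv⟩ := exists_mulVec_eq_smul_of_mem_spectrum hs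
  set w := diagonal (fun i => (d i : ℂ)) *ᵥ v
  have hform : star w ⬝ᵥ B *ᵥ w = s * ↑(∑ i, d i * Complex.normSq (v i)) := by
    rw [mulVec_mulVec, hv, dotProduct_smul, star_diagonal_ofReal_mulVec_dotProduct, smul_eq_mul]
  have := hB w
  rw [hform, Complex.re_mul_ofReal] at this
  exact nonneg_of_mul_nonneg_left this (sum_mul_normSq_pos hd hv0)

end Matrix

theorem stmt_2_general (N : ℕ) (L : Matrix (Fin N) (Fin N) ℝ) (d : Fin N → ℝ)
    (hquad : ∀ η : Fin N → ℝ, 0 ≤ η ⬝ᵥ L.mulVec η)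
    (hd : ∀ i, 0 < d i) :
    ∀ s ∈ spectrum ℂ ((L * Matrix.diagonal d).map (Complex.ofReal ·)), 0 ≤ s.re := by
  intro s hs
  have hmap : (L * diagonal d).map (Complex.ofReal ·) =
      L.map (↑) * diagonal (fun i => (d i : ℂ)) :=
    (Matrix.map_mul (f := Complex.ofRealHom)).trans (by rw [diagonal_map (map_zero _)]; rfl)
  rw [hmap] at hs
  refine re_nonneg_of_mem_spectrum_mul_diagonal (fun w => ?_) hd hs
  rw [re_star_dotProduct_map_ofReal_mulVec]
  exact add_nonneg (hquad _) (hquad _)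

/-- If L is an N×N real matrix with 1^T L = 0, L 1 = 0 and nonnegative
quadratic form, and M is diagonal with strictly positive diagonal entries, then every
complex eigenvalue of L * M has nonnegative real part. -/
theorem stmt_2 (N : ℕ) (L : Matrix (Fin N) (Fin N) ℝ) (d : Fin N → ℝ)
    (hrow : L.mulVec (fun _ => 1) = 0)
    (hcol : Matrix.vecMul (fun _ => 1) L = 0)
    (hquad : ∀ η : Fin N → ℝ, 0 ≤ η ⬝ᵥ L.mulVec η)
    (hd : ∀ i, 0 < d i) :
    ∀ s ∈ spectrum ℂ ((L * Matrix.diagonal d).map (Complex.ofReal ·)), 0 ≤ s.re :=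
  stmt_2_general N L d hquad hd
end

section
/- Let L be an N×N real matrix with η^T L η ≥ 0 for all η ∈ ℝ^N, let ν be a diagonal matrix with strictly negative diagonal entries, let J be an invertible N×N matrix, and let σ > 0. Then the matrix I - σ J L ν J⁻¹ is invertible. -/
/-!
Conjugation by `J` does not change invertibility, so it suffices that `1 - σ L ν` has trivial
kernel. If `y = σ L (ν y)`, then `y ⬝ ν y = σ (ν y) ⬝ L (ν y) ≥ 0`, whereas
`y ⬝ ν y = ∑ ν_i y_i² < 0` for `y ≠ 0`.
-/
open Matrix

theorem Matrix.dotProduct_diagonal_mulVec_self_neg {n R : Type*} [Fintype n] [DecidableEq n]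
    [CommRing R] [LinearOrder R] [IsStrictOrderedRing R] {ν : n → R} (hν : ∀ i, ν i < 0)
    {y : n → R} (hy : y ≠ 0) : y ⬝ᵥ (diagonal ν *ᵥ y) < 0 := by
  obtain ⟨i, hi⟩ := Function.ne_iff.mp hy
  have hterm (j : n) : y j * (ν j * y j) = ν j * (y j * y j) := by ring
  simp only [dotProduct, mulVec_diagonal, hterm]
  refine Finset.sum_neg' (fun j _ ↦ mul_nonpos_of_nonpos_of_nonneg (hν j).le (mul_self_nonneg _))
    ⟨i, Finset.mem_univ i, mul_neg_of_neg_of_pos (hν i) (mul_self_pos.mpr hi)⟩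

theorem Matrix.isUnit_one_sub_smul_mul_of_nonneg_of_neg {n R : Type*} [Fintype n] [DecidableEq n]
    [Field R] [LinearOrder R] [IsStrictOrderedRing R] {L D : Matrix n n R}
    (hL : ∀ η, 0 ≤ η ⬝ᵥ (L *ᵥ η)) (hD : ∀ y ≠ 0, y ⬝ᵥ (D *ᵥ y) < 0) {σ : R} (hσ : 0 ≤ σ) :
    IsUnit (1 - σ • (L * D)) := by
  rw [isUnit_iff_isUnit_det, isUnit_iff_ne_zero, Ne, ← exists_mulVec_eq_zero_iff]
  rintro ⟨y, hy, hker⟩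
  have hfix : y = σ • (L *ᵥ (D *ᵥ y)) := by
    rwa [sub_mulVec, one_mulVec, smul_mulVec, ← mulVec_mulVec, sub_eq_zero] at hker
  have hnonneg : 0 ≤ y ⬝ᵥ (D *ᵥ y) := by
    calc 0 ≤ σ * ((D *ᵥ y) ⬝ᵥ (L *ᵥ (D *ᵥ y))) := mul_nonneg hσ (hL _)
      _ = (σ • (L *ᵥ (D *ᵥ y))) ⬝ᵥ (D *ᵥ y) := by
        rw [smul_dotProduct, dotProduct_comm, smul_eq_mul]
      _ = y ⬝ᵥ (D *ᵥ y) := by rw [← hfix]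
  exact (hD y hy).not_ge hnonneg

theorem Matrix.one_sub_smul_conj {n R : Type*} [Fintype n] [DecidableEq n] [CommRing R]
    {J : Matrix n n R} (hJ : IsUnit J) (c : R) (A : Matrix n n R) :
    1 - c • (J * A * J⁻¹) = J * (1 - c • A) * J⁻¹ := by
  rw [mul_sub, sub_mul, mul_one, mul_nonsing_inv J ((isUnit_iff_isUnit_det J).mp hJ),
    mul_smul_comm, smul_mul_assoc]

/-- If L has nonnegative quadratic form, ν is diagonal with strictly negative
diagonal entries, J is invertible and σ > 0, then I - σ J L ν J⁻¹ is invertible. -/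
theorem stmt_3 (N : ℕ) (L J : Matrix (Fin N) (Fin N) ℝ) (ν : Fin N → ℝ) (σ : ℝ)
    (hquad : ∀ η : Fin N → ℝ, 0 ≤ η ⬝ᵥ L.mulVec η)
    (hν : ∀ i, ν i < 0)
    (hJ : IsUnit J)
    (hσ : 0 < σ) :
    IsUnit (1 - σ • (J * L * Matrix.diagonal ν * J⁻¹)) := by
  have hLν : IsUnit (1 - σ • (L * diagonal ν)) :=
    isUnit_one_sub_smul_mul_of_nonneg_of_neg hquad
      (fun _ ↦ dotProduct_diagonal_mulVec_self_neg hν) hσ.le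
  rw [mul_assoc J, one_sub_smul_conj hJ, isUnit_iff_isUnit_det, det_conj hJ]
  exact (isUnit_iff_isUnit_det _).mp hLν
end

section
/- Let B be a symmetric positive definite m×m matrix with μI ≤ B, let α, γ > 0, and let η > 1/(μαγ). Then the 2m×2m block matrix R = [[ (η/2)I + (μ/(2αγ))B⁻² - (1/(αγ))B⁻¹ , (η/2)I - (1/(2αγ))B⁻¹ ], [ (η/2)I - (1/(2αγ))B⁻¹ , (η/2)I ]] is positive definite. -/
open Matrix

private lemma aux_posDef_of_posSemidef_det_ne_zero {n : Type*} [Fintype n] [DecidableEq n]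
    {M : Matrix n n ℝ} (h : M.PosSemidef) (hdet : M.det ≠ 0) : M.PosDef := by
  refine posDef_iff_dotProduct_mulVec.mpr ⟨h.1, fun x hx => lt_of_le_of_ne (h.dotProduct_mulVec_nonneg x) (Ne.symm fun h0 => hx ?_)⟩
  have hMx : M *ᵥ x = 0 := (h.dotProduct_mulVec_zero_iff x).mp h0
  have hU : IsUnit M := by
    rw [Matrix.isUnit_iff_isUnit_det]
    exact isUnit_iff_ne_zero.mpr hdet
  have hinj := Matrix.mulVec_injective_iff_isUnit.mpr hU
  have : M *ᵥ x = M *ᵥ 0 := by rw [hMx, Matrix.mulVec_zero]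
  exact hinj this

private lemma aux_posDef_smul {n : Type*} [Fintype n] {M : Matrix n n ℝ} (h : M.PosDef)
    {k : ℝ} (hk : 0 < k) : (k • M).PosDef := by
  have hH : (k • M).IsHermitian := by
    rw [Matrix.IsHermitian, Matrix.conjTranspose_smul, h.1.eq, star_trivial]
  refine posDef_iff_dotProduct_mulVec.mpr ⟨hH, fun x hx => ?_⟩
  rw [Matrix.smul_mulVec, dotProduct_smul, smul_eq_mul]
  exact mul_pos hk (h.dotProduct_mulVec_pos hx)

/-- For B symmetric positive definite with μI ≤ B, α, γ > 0 and η > 1/(μαγ),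
the 2m×2m block matrix R is positive definite. -/
theorem stmt_6 (m : ℕ) (B : Matrix (Fin m) (Fin m) ℝ) (μ α γ η : ℝ)
    (hB : B.PosDef) (hμB : (B - μ • (1 : Matrix (Fin m) (Fin m) ℝ)).PosSemidef)
    (hμ : 0 < μ) (hα : 0 < α) (hγ : 0 < γ) (hη : 1 / (μ * α * γ) < η) :
    (Matrix.fromBlocks
      ((η / 2) • (1 : Matrix (Fin m) (Fin m) ℝ) + (μ / (2 * α * γ)) • (B⁻¹ * B⁻¹)
          - (1 / (α * γ)) • B⁻¹)
      ((η / 2) • (1 : Matrix (Fin m) (Fin m) ℝ) - (1 / (2 * α * γ)) • B⁻¹)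
      ((η / 2) • (1 : Matrix (Fin m) (Fin m) ℝ) - (1 / (2 * α * γ)) • B⁻¹)
      ((η / 2) • (1 : Matrix (Fin m) (Fin m) ℝ))).PosDef := by
  have hη0 : 0 < η := lt_trans (by positivity) hη
  have hηαγμ : 1 < η * (μ * α * γ) := by
    rw [div_lt_iff₀ (by positivity)] at hη
    nlinarith
  set A : Matrix (Fin m) (Fin m) ℝ :=
    (η / 2) • (1 : Matrix (Fin m) (Fin m) ℝ) + (μ / (2 * α * γ)) • (B⁻¹ * B⁻¹)
      - (1 / (α * γ)) • B⁻¹ with hA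
  set C : Matrix (Fin m) (Fin m) ℝ :=
    (η / 2) • (1 : Matrix (Fin m) (Fin m) ℝ) - (1 / (2 * α * γ)) • B⁻¹ with hC
  set D : Matrix (Fin m) (Fin m) ℝ := (η / 2) • (1 : Matrix (Fin m) (Fin m) ℝ) with hD
  have hB1 : B⁻¹.IsHermitian := hB.isHermitian.inv
  have hCH : Cᴴ = C := by
    rw [hC, conjTranspose_sub, conjTranspose_smul, conjTranspose_smul, conjTranspose_one, hB1.eq]
    norm_num
    rfl
  have hDpd : D.PosDef := aux_posDef_smul Matrix.PosDef.one (by positivity)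
  haveI : Invertible D := hDpd.isUnit.invertible
  have hDinv : D⁻¹ = (2 / η) • (1 : Matrix (Fin m) (Fin m) ℝ) := by
    apply Matrix.inv_eq_right_inv
    rw [hD, Matrix.smul_mul, Matrix.mul_smul, Matrix.one_mul, smul_smul]
    rw [show η / 2 * (2 / η) = 1 by field_simp]
    simp
  -- the Schur complement
  set k : ℝ := μ / (2 * α * γ) - 2 / η * (1 / (2 * α * γ) * (1 / (2 * α * γ))) with hk
  have hkpos : 0 < k := by
    have : k = (η * (μ * α * γ) - 1) / (2 * η * α ^ 2 * γ ^ 2) := by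
      rw [hk]; field_simp
    rw [this]
    apply div_pos (by linarith) (by positivity)
  have hCC : C * C = (η / 2 * (η / 2)) • (1 : Matrix (Fin m) (Fin m) ℝ)
      - (η / 2 * (1 / (2 * α * γ)) + 1 / (2 * α * γ) * (η / 2)) • B⁻¹
      + (1 / (2 * α * γ) * (1 / (2 * α * γ))) • (B⁻¹ * B⁻¹) := by
    rw [hC, hD]
    simp only [Matrix.sub_mul, Matrix.mul_sub, smul_mul_assoc, mul_smul_comm, Matrix.one_mul,
      Matrix.mul_one, smul_smul]
    module
  have hCDC : C * D⁻¹ * Cᴴ = (2 / η * (η / 2 * (η / 2))) • (1 : Matrix (Fin m) (Fin m) ℝ)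
      - (2 / η * (η / 2 * (1 / (2 * α * γ)) + 1 / (2 * α * γ) * (η / 2))) • B⁻¹
      + (2 / η * (1 / (2 * α * γ) * (1 / (2 * α * γ)))) • (B⁻¹ * B⁻¹) := by
    rw [hCH, hDinv, Matrix.mul_smul, Matrix.mul_one, Matrix.smul_mul, hCC, smul_add, smul_sub,
      smul_smul, smul_smul, smul_smul]
  have hSchur : A - C * D⁻¹ * Cᴴ = k • (B⁻¹ * B⁻¹) := by
    rw [hCDC, hA, hk]
    rw [show 2 / η * (η / 2 * (η / 2)) = η / 2 by field_simp]
    rw [show 2 / η * (η / 2 * (1 / (2 * α * γ)) + 1 / (2 * α * γ) * (η / 2)) = 1 / (α * γ) by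
      field_simp; ring]
    module
  have hBinvSq : (B⁻¹ * B⁻¹).PosDef := by
    apply aux_posDef_of_posSemidef_det_ne_zero
    · have := Matrix.posSemidef_conjTranspose_mul_self B⁻¹
      rwa [hB1.eq] at this
    · rw [Matrix.det_mul]
      have := hB.inv.det_pos
      positivity
  have hSpd : (A - C * D⁻¹ * Cᴴ).PosDef := by
    rw [hSchur]; exact aux_posDef_smul hBinvSq hkpos
  have hpsd : (Matrix.fromBlocks A C Cᴴ D).PosSemidef :=
    (Matrix.PosDef.fromBlocks₂₂ A C hDpd).mpr hSpd.posSemidef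
  have hdet : (Matrix.fromBlocks A C Cᴴ D).det ≠ 0 := by
    rw [Matrix.det_fromBlocks₂₂, Matrix.invOf_eq_nonsing_inv]
    exact ne_of_gt (mul_pos hDpd.det_pos hSpd.det_pos)
  have := aux_posDef_of_posSemidef_det_ne_zero hpsd hdet
  rwa [hCH] at this
end

section
/- Let a_{ij} ≥ 0 be weight-balanced adjacency weights with in/out degrees d_i, let ν_i ≤ 0, and let σ > 0 satisfy σ < 1/(2 max_i d_i |ν_i|) (with the convention the bound is +∞ if all d_i|ν_i| = 0). Then for all y_1,...,y_N ∈ ℝ^m, with u_i = σ ∑_j a_{ij}(y_j - y_i), one has ∑_i (y_i^T u_i - ν_i ‖u_i‖²) ≤ -σ ∑_i (1/2 - σ|ν_i| d_i) ∑_j a_{ij}‖y_j - y_i‖² ≤ 0. -/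
open RealInnerProductSpace Finset

lemma cs_aux {N : ℕ} {E : Type*} [NormedAddCommGroup E] [InnerProductSpace ℝ E]
    (w : Fin N → ℝ) (hw : ∀ j, 0 ≤ w j) (v : Fin N → E) :
    ‖∑ j, w j • v j‖ ^ 2 ≤ (∑ j, w j) * ∑ j, w j * ‖v j‖ ^ 2 := by
  have h1 : ‖∑ j, w j • v j‖ ≤ ∑ j, w j * ‖v j‖ := by
    refine (norm_sum_le _ _).trans (le_of_eq ?_)
    simp [norm_smul, abs_of_nonneg (hw _)]
  have h2 : (∑ j, w j * ‖v j‖) ^ 2 ≤ (∑ j, w j) * ∑ j, w j * ‖v j‖ ^ 2 := by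
    have := Finset.sum_mul_sq_le_sq_mul_sq Finset.univ
      (fun j => Real.sqrt (w j)) (fun j => Real.sqrt (w j) * ‖v j‖)
    calc (∑ j, w j * ‖v j‖) ^ 2
        = (∑ j, Real.sqrt (w j) * (Real.sqrt (w j) * ‖v j‖)) ^ 2 := by
          congr 1; apply Finset.sum_congr rfl; intro j _
          rw [← mul_assoc, Real.mul_self_sqrt (hw j)]
      _ ≤ (∑ j, Real.sqrt (w j) ^ 2) * ∑ j, (Real.sqrt (w j) * ‖v j‖) ^ 2 := this
      _ = (∑ j, w j) * ∑ j, w j * ‖v j‖ ^ 2 := by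
          congr 1 <;> (apply Finset.sum_congr rfl; intro j _)
          · exact Real.sq_sqrt (hw j)
          · rw [mul_pow, Real.sq_sqrt (hw j)]
  calc ‖∑ j, w j • v j‖ ^ 2 ≤ (∑ j, w j * ‖v j‖) ^ 2 :=
        pow_le_pow_left₀ (norm_nonneg _) h1 2
    _ ≤ _ := h2

/-- With weight-balanced weights a (degrees d_i), ν_i ≤ 0 and σ > 0 with
σ < 1/(2 max_i d_i|ν_i|) (stated as 2 σ d_i |ν_i| < 1 for every i, which also covers the
convention that the bound is +∞ when all d_i|ν_i| = 0), setting
u_i = σ ∑_j a_{ij}(y_j - y_i) one has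
∑_i (y_i^T u_i - ν_i ‖u_i‖²) ≤ -σ ∑_i (1/2 - σ|ν_i|d_i) ∑_j a_{ij}‖y_j - y_i‖² ≤ 0. -/
theorem stmt_10 (N m : ℕ) (a : Fin N → Fin N → ℝ) (ν : Fin N → ℝ) (σ : ℝ)
    (hnn : ∀ i j, 0 ≤ a i j) (hdiag : ∀ i, a i i = 0)
    (hbal : ∀ i, ∑ j, a i j = ∑ j, a j i)
    (hν : ∀ i, ν i ≤ 0) (hσ : 0 < σ)
    (hgain : ∀ i, 2 * σ * ((∑ j, a i j) * |ν i|) < 1)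
    (y : Fin N → EuclideanSpace ℝ (Fin m))
    (u : Fin N → EuclideanSpace ℝ (Fin m))
    (hu : ∀ i, u i = σ • ∑ j, a i j • (y j - y i)) :
    (∑ i, (⟪y i, u i⟫ - ν i * ‖u i‖ ^ 2) ≤
      -σ * ∑ i, (1 / 2 - σ * |ν i| * ∑ j, a i j) * ∑ j, a i j * ‖y j - y i‖ ^ 2) ∧
    (-σ * ∑ i, (1 / 2 - σ * |ν i| * ∑ j, a i j) * ∑ j, a i j * ‖y j - y i‖ ^ 2 ≤ 0) := by
  set Q : Fin N → ℝ := fun i => ∑ j, a i j * ‖y j - y i‖ ^ 2 with hQ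
  have hQnn : ∀ i, 0 ≤ Q i := fun i =>
    Finset.sum_nonneg fun j _ => mul_nonneg (hnn i j) (sq_nonneg _)
  -- Laplacian identity
  have lap : ∑ i, ∑ j, a i j * ⟪y i, y j - y i⟫ = -(1/2) * ∑ i, Q i := by
    have key : ∀ i j, a i j * ⟪y i, y j - y i⟫ =
        -(1/2) * (a i j * ‖y j - y i‖ ^ 2) + (1/2) * (a i j * ‖y j‖^2 - a i j * ‖y i‖^2) := by
      intro i j
      have h : ‖y j - y i‖ ^ 2 = ‖y j‖^2 - 2 * ⟪y i, y j⟫ + ‖y i‖^2 := by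
        rw [@norm_sub_sq_real, real_inner_comm]
      have h2 : ⟪y i, y j - y i⟫ = ⟪y i, y j⟫ - ‖y i‖^2 := by
        rw [inner_sub_right, real_inner_self_eq_norm_sq]
      rw [h, h2]; ring
    have bal0 : ∑ i, ∑ j, (a i j * ‖y j‖^2 - a i j * ‖y i‖^2) = 0 := by
      have : ∑ i, ∑ j, a i j * ‖y j‖^2 = ∑ i, ∑ j, a i j * ‖y i‖^2 := by
        rw [Finset.sum_comm]
        apply Finset.sum_congr rfl; intro j _
        rw [← Finset.sum_mul, ← Finset.sum_mul, ← hbal j]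
      simp [Finset.sum_sub_distrib, this]
    calc ∑ i, ∑ j, a i j * ⟪y i, y j - y i⟫
        = ∑ i, ∑ j, (-(1/2) * (a i j * ‖y j - y i‖ ^ 2)
            + (1/2) * (a i j * ‖y j‖^2 - a i j * ‖y i‖^2)) := by
          apply Finset.sum_congr rfl; intro i _
          exact Finset.sum_congr rfl fun j _ => key i j
      _ = -(1/2) * ∑ i, Q i + (1/2) * ∑ i, ∑ j, (a i j * ‖y j‖^2 - a i j * ‖y i‖^2) := by
          rw [Finset.mul_sum, Finset.mul_sum, ← Finset.sum_add_distrib]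
          apply Finset.sum_congr rfl; intro i _
          rw [Finset.mul_sum, Finset.mul_sum, ← Finset.sum_add_distrib]
      _ = -(1/2) * ∑ i, Q i := by rw [bal0]; ring
  -- inner product term
  have inner_eq : ∑ i, ⟪y i, u i⟫ = -(σ/2) * ∑ i, Q i := by
    have : ∀ i, ⟪y i, u i⟫ = σ * ∑ j, a i j * ⟪y i, y j - y i⟫ := by
      intro i
      rw [hu i, inner_smul_right, inner_sum]
      congr 1
      exact Finset.sum_congr rfl fun j _ => by rw [real_inner_smul_right]
    simp only [this, ← Finset.mul_sum, ← Finset.sum_mul]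
    rw [lap]; ring
  -- Cauchy–Schwarz bound on ‖u i‖²
  have ub : ∀ i, ‖u i‖ ^ 2 ≤ σ^2 * ((∑ j, a i j) * Q i) := by
    intro i
    rw [hu i, norm_smul, mul_pow]
    have := cs_aux (fun j => a i j) (hnn i) (fun j => y j - y i)
    calc |σ|^2 * ‖∑ j, a i j • (y j - y i)‖^2
        ≤ |σ|^2 * ((∑ j, a i j) * Q i) := by
          apply mul_le_mul_of_nonneg_left this (by positivity)
      _ = σ^2 * ((∑ j, a i j) * Q i) := by rw [sq_abs]
  have nu_bound : ∀ i, -(ν i * ‖u i‖^2) ≤ σ^2 * |ν i| * (∑ j, a i j) * Q i := by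
    intro i
    have habs : -(ν i) = |ν i| := (abs_of_nonpos (hν i)).symm
    calc -(ν i * ‖u i‖^2) = |ν i| * ‖u i‖^2 := by rw [← habs]; ring
      _ ≤ |ν i| * (σ^2 * ((∑ j, a i j) * Q i)) :=
          mul_le_mul_of_nonneg_left (ub i) (abs_nonneg _)
      _ = σ^2 * |ν i| * (∑ j, a i j) * Q i := by ring
  constructor
  · have sum_le : ∑ i, (⟪y i, u i⟫ - ν i * ‖u i‖ ^ 2)
        ≤ -(σ/2) * ∑ i, Q i + ∑ i, σ^2 * |ν i| * (∑ j, a i j) * Q i := by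
      have : ∑ i, (⟪y i, u i⟫ - ν i * ‖u i‖ ^ 2)
          = ∑ i, ⟪y i, u i⟫ + ∑ i, -(ν i * ‖u i‖^2) := by
        rw [← Finset.sum_add_distrib]; apply Finset.sum_congr rfl; intros; ring
      rw [this, inner_eq]
      exact add_le_add le_rfl (Finset.sum_le_sum fun i _ => nu_bound i)
    refine sum_le.trans (le_of_eq ?_)
    rw [Finset.mul_sum, Finset.mul_sum, ← Finset.sum_add_distrib, ← Finset.mul_sum,
      Finset.mul_sum]
    apply Finset.sum_congr rfl; intro i _; ring
  · rw [neg_mul]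
    apply neg_nonpos_of_nonneg
    apply mul_nonneg hσ.le
    apply Finset.sum_nonneg; intro i _
    apply mul_nonneg _ (hQnn i)
    have := hgain i
    nlinarith [abs_nonneg (ν i), hσ]
end

section
/- Let L(t) be the Laplacian of a weight-balanced digraph for each t (so 1^T L(t) = 0), let K_i, J_i be invertible m×m matrices with K_i J_i = C^T for a common matrix C, and suppose λ(t) solves λ̇ = σ(t) γ J L(t) C x(t) (Kronecker-extended notation) with ∑_i K_i λ_i(0) = 0. Then ∑_i K_i λ_i(t) = 0 for all t ≥ 0. -/
open Matrix Finset

/-- If each L(t) satisfies 1^T L(t) = 0 (weight-balanced Laplacian),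
K_i J_i = Cᵀ with K_i, J_i invertible, and λ solves λ̇ = σ(t) γ J 𝐋(t) 𝐂 x(t)
(componentwise: λ̇_i = σ(t) γ J_i ∑_j L(t)_{ij} C x_j(t)) with ∑_i K_i λ_i(0) = 0,
then ∑_i K_i λ_i(t) = 0 for all t ≥ 0. -/
theorem stmt_12 (N m : ℕ) (L : ℝ → Matrix (Fin N) (Fin N) ℝ)
    (K J : Fin N → Matrix (Fin m) (Fin m) ℝ) (C : Matrix (Fin m) (Fin m) ℝ)
    (σ : ℝ → ℝ) (γ : ℝ)
    (lam x : Fin N → ℝ → (Fin m → ℝ))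
    (hbal : ∀ t, Matrix.vecMul (fun _ => 1) (L t) = 0)
    (hKJ : ∀ i, K i * J i = Cᵀ)
    (hK : ∀ i, IsUnit (K i)) (hJ : ∀ i, IsUnit (J i))
    (hσ : ∀ t, 0 < σ t) (hγ : 0 < γ)
    (hode : ∀ i t, HasDerivAt (lam i)
      ((σ t * γ) • (J i).mulVec (∑ j, L t i j • C.mulVec (x j t))) t)
    (hinit : ∑ i, (K i).mulVec (lam i 0) = 0) :
    ∀ t : ℝ, 0 ≤ t → ∑ i, (K i).mulVec (lam i t) = 0 := by
  set f : ℝ → (Fin m → ℝ) := fun t => ∑ i, (K i).mulVec (lam i t) with hf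
  have hKlin : ∀ i, ∃ Φ : (Fin m → ℝ) →L[ℝ] (Fin m → ℝ),
      ∀ v, Φ v = (K i).mulVec v := fun i =>
    ⟨LinearMap.toContinuousLinearMap ((K i).mulVecLin), fun v => rfl⟩
  have hderiv : ∀ t, HasDerivAt f 0 t := by
    intro t
    have h1 : HasDerivAt f
        (∑ i, (K i).mulVec ((σ t * γ) • (J i).mulVec (∑ j, L t i j • C.mulVec (x j t)))) t := by
      apply HasDerivAt.fun_sum
      intro i _
      obtain ⟨Φ, hΦ⟩ := hKlin i
      have := Φ.hasFDerivAt.comp_hasDerivAt t (hode i t)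
      simpa [hΦ, Function.comp_def] using this
    have h2 : (∑ i, (K i).mulVec ((σ t * γ) • (J i).mulVec (∑ j, L t i j • C.mulVec (x j t)))) = 0 := by
      have key : ∀ i, (K i).mulVec ((σ t * γ) • (J i).mulVec (∑ j, L t i j • C.mulVec (x j t)))
          = (σ t * γ) • ∑ j, L t i j • (Cᵀ * C).mulVec (x j t) := by
        intro i
        rw [Matrix.mulVec_smul]
        congr 1
        rw [Matrix.mulVec_mulVec, hKJ i, ← Matrix.mulVecLin_apply, map_sum]
        simp [Matrix.mulVecLin_apply, Matrix.mulVec_smul, ← Matrix.mulVec_mulVec, Matrix.mulVec_transpose]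
      simp only [key]
      rw [← Finset.smul_sum, Finset.sum_comm]
      have : ∀ j, ∑ i, L t i j • (Cᵀ * C).mulVec (x j t) = 0 := by
        intro j
        rw [← Finset.sum_smul]
        have hcol : ∑ i, L t i j = 0 := by
          have := congrFun (hbal t) j
          simpa [Matrix.vecMul, dotProduct] using this
        rw [hcol, zero_smul]
      simp [this]
    rw [h2] at h1; exact h1
  have hconst : ∀ t : ℝ, f t = f 0 := by
    intro t
    have hd : Differentiable ℝ f := fun t => (hderiv t).differentiableAt
    have h0 : ∀ t, deriv f t = 0 := fun t => (hderiv t).deriv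
    exact is_const_of_deriv_eq_zero hd h0 t 0
  intro t _
  exact (hconst t).trans hinit
end

section
/- Let M be an N×N real symmetric positive semidefinite matrix and P an N×N real matrix such that ker(M) = ker(P^T P) (they have the same null space). Then for every ε with 0 < ε < s_+(M)/s_N(P^T P) (where s_+(M) is the smallest nonzero eigenvalue of M and s_N(P^T P) the largest eigenvalue of P^T P), the matrix M - ε P^T P is positive semidefinite. -/
open Matrix Polynomial

/-- A real number is a root of the characteristic polynomial iff it is an eigenvalue. -/
lemma aux_root_iff {N : ℕ} (A : Matrix (Fin N) (Fin N) ℝ) (r : ℝ) :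
    A.charpoly.IsRoot r ↔ ∃ v, v ≠ 0 ∧ A.mulVec v = r • v := by
  have h : A.charpoly.eval r = (scalar (Fin N) r - A).det := by
    rw [charpoly, eval_det, matPolyEquiv_charmatrix]
    simp
  have key : ∀ v, (scalar (Fin N) r - A) *ᵥ v = r • v - A *ᵥ v := by
    intro v
    rw [sub_mulVec]
    congr 1
    ext i
    simp [Matrix.scalar, mulVec_diagonal]
  constructor
  · intro hr
    have hdet : (scalar (Fin N) r - A).det = 0 := by rw [← h]; exact hr
    obtain ⟨v, hv0, hv⟩ := (Matrix.exists_mulVec_eq_zero_iff).2 hdet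
    refine ⟨v, hv0, ?_⟩
    have h2 : r • v - A *ᵥ v = 0 := by rw [← key v]; exact hv
    exact (sub_eq_zero.mp h2).symm
  · rintro ⟨v, hv0, hv⟩
    show A.charpoly.eval r = 0
    rw [h, ← Matrix.exists_mulVec_eq_zero_iff]
    exact ⟨v, hv0, by rw [key, hv, sub_self]⟩

section herm

variable {N : ℕ} {A : Matrix (Fin N) (Fin N) ℝ} (hA : A.IsHermitian)

/-- The eigenvector unitary preserves dot products. -/
lemma aux_unitary_dot (a b : Fin N → ℝ) :
    ((hA.eigenvectorUnitary : Matrix (Fin N) (Fin N) ℝ) *ᵥ a) ⬝ᵥ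
    ((hA.eigenvectorUnitary : Matrix (Fin N) (Fin N) ℝ) *ᵥ b) = a ⬝ᵥ b := by
  set U := (hA.eigenvectorUnitary : Matrix (Fin N) (Fin N) ℝ) with hU
  have h1 : star U * U = 1 := mem_unitaryGroup_iff'.mp hA.eigenvectorUnitary.2
  have hsU : star U = Uᵀ := by
    rw [Matrix.star_eq_conjTranspose, conjTranspose_eq_transpose_of_trivial]
  have h2 : Uᵀ * U = 1 := by rw [← hsU]; exact h1
  calc (U *ᵥ a) ⬝ᵥ (U *ᵥ b) = ((U *ᵥ a) ᵥ* U) ⬝ᵥ b := dotProduct_mulVec _ U b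
    _ = ((a ᵥ* Uᵀ) ᵥ* U) ⬝ᵥ b := by rw [vecMul_transpose]
    _ = (a ᵥ* (Uᵀ * U)) ⬝ᵥ b := by rw [vecMul_vecMul]
    _ = a ⬝ᵥ b := by rw [h2, vecMul_one]

/-- Real version of the spectral theorem. -/
lemma aux_spectral :
    A = (hA.eigenvectorUnitary : Matrix (Fin N) (Fin N) ℝ) * diagonal hA.eigenvalues
      * star (hA.eigenvectorUnitary : Matrix (Fin N) (Fin N) ℝ) := by
  simpa using hA.spectral_theorem

lemma aux_mulVec (y : Fin N → ℝ) :
    A *ᵥ ((hA.eigenvectorUnitary : Matrix (Fin N) (Fin N) ℝ) *ᵥ y)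
      = (hA.eigenvectorUnitary : Matrix (Fin N) (Fin N) ℝ) *ᵥ
          (fun i => hA.eigenvalues i * y i) := by
  set U := (hA.eigenvectorUnitary : Matrix (Fin N) (Fin N) ℝ) with hU
  have h1 : star U * U = 1 := mem_unitaryGroup_iff'.mp hA.eigenvectorUnitary.2
  have h2 : star U *ᵥ (U *ᵥ y) = y := by rw [mulVec_mulVec, h1, one_mulVec]
  conv_lhs => rw [aux_spectral hA]
  rw [← hU, ← mulVec_mulVec, h2]
  ext i
  simp [mulVec, dotProduct, mul_diagonal, mul_assoc]

lemma aux_mulVec_eq_zero (y : Fin N → ℝ)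
    (h : (hA.eigenvectorUnitary : Matrix (Fin N) (Fin N) ℝ) *ᵥ y = 0) : y = 0 := by
  set U := (hA.eigenvectorUnitary : Matrix (Fin N) (Fin N) ℝ) with hU
  have h1 : star U * U = 1 := mem_unitaryGroup_iff'.mp hA.eigenvectorUnitary.2
  have : (star U * U) *ᵥ y = 0 := by rw [← mulVec_mulVec, h, mulVec_zero]
  rwa [h1, one_mulVec] at this

lemma aux_decomp (x : Fin N → ℝ) :
    x = (hA.eigenvectorUnitary : Matrix (Fin N) (Fin N) ℝ) *ᵥ
      (star (hA.eigenvectorUnitary : Matrix (Fin N) (Fin N) ℝ) *ᵥ x) := by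
  set U := (hA.eigenvectorUnitary : Matrix (Fin N) (Fin N) ℝ) with hU
  have h1 : U * star U = 1 := mem_unitaryGroup_iff.mp hA.eigenvectorUnitary.2
  rw [mulVec_mulVec, h1, one_mulVec]

/-- Each eigenvalue is a root of the characteristic polynomial. -/
lemma aux_eig_isRoot (i : Fin N) : A.charpoly.IsRoot (hA.eigenvalues i) := by
  rw [aux_root_iff]
  refine ⟨(hA.eigenvectorUnitary : Matrix (Fin N) (Fin N) ℝ) *ᵥ Pi.single i 1, ?_, ?_⟩
  · intro h
    have := aux_mulVec_eq_zero hA _ h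
    have h2 := congrFun this i
    simp at h2
  · rw [aux_mulVec hA]
    have hfun : (fun j => hA.eigenvalues j * (Pi.single i 1 : Fin N → ℝ) j)
        = hA.eigenvalues i • (Pi.single i 1 : Fin N → ℝ) := by
      funext j
      rcases eq_or_ne j i with rfl | hji
      · simp
      · simp [Pi.single_eq_of_ne hji]
    rw [hfun, mulVec_smul]

/-- A nonzero symmetric matrix has a nonzero eigenvalue. -/
lemma aux_exists_ne_zero (hA0 : A ≠ 0) : ∃ i, hA.eigenvalues i ≠ 0 := by
  by_contra h
  push_neg at h
  apply hA0
  have : diagonal hA.eigenvalues = 0 := by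
    ext i j
    rcases eq_or_ne i j with rfl | hij
    · simp [h i]
    · simp [diagonal_apply_ne _ hij]
  rw [aux_spectral hA, this, mul_zero, zero_mul]

/-- Quadratic-form upper bound by a bound on all eigenvalues. -/
lemma aux_quad_le (c : ℝ) (hc : ∀ i, hA.eigenvalues i ≤ c) (v : Fin N → ℝ) :
    v ⬝ᵥ (A *ᵥ v) ≤ c * (v ⬝ᵥ v) := by
  set U := (hA.eigenvectorUnitary : Matrix (Fin N) (Fin N) ℝ) with hU
  set y := star U *ᵥ v with hy
  have hv : v = U *ᵥ y := aux_decomp hA v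
  have h1 : v ⬝ᵥ (A *ᵥ v) = y ⬝ᵥ (fun i => hA.eigenvalues i * y i) := by
    conv_lhs => rw [hv, aux_mulVec hA]
    exact aux_unitary_dot hA _ _
  have h2 : v ⬝ᵥ v = y ⬝ᵥ y := by conv_lhs => rw [hv]; exact aux_unitary_dot hA _ _
  rw [h1, h2]
  simp only [dotProduct, Finset.mul_sum]
  apply Finset.sum_le_sum
  intro i _
  have hsq : 0 ≤ y i * y i := mul_self_nonneg _
  calc y i * (hA.eigenvalues i * y i) = hA.eigenvalues i * (y i * y i) := by ring
    _ ≤ c * (y i * y i) := mul_le_mul_of_nonneg_right (hc i) hsq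
    _ = c * (y i * y i) := rfl

end herm

/-- The smallest nonzero (real) eigenvalue of a matrix, via roots of the characteristic
polynomial. -/
noncomputable def smallestNonzeroEig {N : ℕ} (M : Matrix (Fin N) (Fin N) ℝ) : ℝ :=
  sInf {r : ℝ | r ≠ 0 ∧ M.charpoly.IsRoot r}

/-- The largest (real) eigenvalue of a matrix, via roots of the characteristic
polynomial. -/
noncomputable def largestEig {N : ℕ} (M : Matrix (Fin N) (Fin N) ℝ) : ℝ :=
  sSup {r : ℝ | M.charpoly.IsRoot r}

set_option maxHeartbeats 1000000 in
/-- If M is symmetric positive semidefinite, M ≠ 0, and ker M = ker(PᵀP),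
then for every ε with 0 < ε < s₊(M)/s_N(PᵀP), the matrix M - ε PᵀP is positive
semidefinite. -/
theorem stmt_14 (N : ℕ) (M P : Matrix (Fin N) (Fin N) ℝ)
    (hM : M.PosSemidef) (hM0 : M ≠ 0)
    (hker : ∀ x : Fin N → ℝ, M.mulVec x = 0 ↔ (Pᵀ * P).mulVec x = 0)
    (ε : ℝ) (hε0 : 0 < ε)
    (hε : ε < smallestNonzeroEig M / largestEig (Pᵀ * P)) :
    (M - ε • (Pᵀ * P)).PosSemidef := by
  classical
  have hQ : (Pᵀ * P).PosSemidef := by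
    have := Matrix.posSemidef_conjTranspose_mul_self P
    rwa [conjTranspose_eq_transpose_of_trivial] at this
  set Q := Pᵀ * P with hQdef
  -- Q ≠ 0
  have hQ0 : Q ≠ 0 := by
    intro h
    apply hM0
    have hz : ∀ x, M *ᵥ x = 0 := fun x => (hker x).2 (by rw [h, zero_mulVec])
    ext i j
    have := congrFun (hz (Pi.single j 1)) i
    simpa [mulVec_single] using this
  -- positivity of dot product with itself
  have hdotpos : ∀ v : Fin N → ℝ, v ≠ 0 → 0 < v ⬝ᵥ v := by
    intro v hv
    have hnn : 0 ≤ v ⬝ᵥ v := Finset.sum_nonneg fun i _ => mul_self_nonneg _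
    rcases hnn.lt_or_eq with h | h
    · exact h
    · exact absurd ((dotProduct_self_eq_zero).mp h.symm) hv
  -- every nonzero root of M's charpoly is positive; similarly roots of Q's charpoly are nonneg
  have hroot_pos : ∀ (A : Matrix (Fin N) (Fin N) ℝ), A.PosSemidef →
      ∀ r : ℝ, A.charpoly.IsRoot r → 0 ≤ r := by
    intro A hA r hr
    obtain ⟨v, hv0, hv⟩ := (aux_root_iff A r).mp hr
    have h1 : 0 ≤ v ⬝ᵥ (A *ᵥ v) := by simpa using hA.dotProduct_mulVec_nonneg v
    rw [hv, dotProduct_smul, smul_eq_mul] at h1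
    have := hdotpos v hv0
    nlinarith [h1, this]
  -- the sets of roots
  have hMfin : {r : ℝ | r ≠ 0 ∧ M.charpoly.IsRoot r}.Finite :=
    (Polynomial.finite_setOf_isRoot (M.charpoly_monic.ne_zero)).subset fun r hr => hr.2
  have hQfin : {r : ℝ | Q.charpoly.IsRoot r}.Finite :=
    Polynomial.finite_setOf_isRoot (Q.charpoly_monic.ne_zero)
  -- nonemptiness
  obtain ⟨iM, hiM⟩ := aux_exists_ne_zero hM.1 hM0
  obtain ⟨iQ, hiQ⟩ := aux_exists_ne_zero hQ.1 hQ0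
  have hMne : {r : ℝ | r ≠ 0 ∧ M.charpoly.IsRoot r}.Nonempty :=
    ⟨hM.1.eigenvalues iM, hiM, aux_eig_isRoot hM.1 iM⟩
  have hQne : {r : ℝ | Q.charpoly.IsRoot r}.Nonempty :=
    ⟨hQ.1.eigenvalues iQ, aux_eig_isRoot hQ.1 iQ⟩
  set sP := smallestNonzeroEig M with hsP
  set sN := largestEig Q with hsN
  -- sP is positive
  have hsPmem : sP ∈ {r : ℝ | r ≠ 0 ∧ M.charpoly.IsRoot r} :=
    hMne.csInf_mem hMfin
  have hsPpos : 0 < sP :=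
    lt_of_le_of_ne (hroot_pos M hM sP hsPmem.2) (Ne.symm hsPmem.1)
  -- sN bounds eigenvalues of Q, and sN > 0
  have hsNge : ∀ i, hQ.1.eigenvalues i ≤ sN := fun i =>
    le_csSup hQfin.bddAbove (aux_eig_isRoot hQ.1 i)
  have hsNpos : 0 < sN := by
    have h1 : 0 ≤ hQ.1.eigenvalues iQ := hQ.eigenvalues_nonneg iQ
    have := hsNge iQ
    rcases h1.lt_or_eq with h | h
    · linarith
    · exact absurd h.symm hiQ
  -- sP bounds nonzero eigenvalues of M from below
  have hsPle : ∀ i, hM.1.eigenvalues i ≠ 0 → sP ≤ hM.1.eigenvalues i := fun i hi =>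
    csInf_le hMfin.bddBelow ⟨hi, aux_eig_isRoot hM.1 i⟩
  -- key inequality from hε
  have hεsN : ε * sN < sP := by
    rw [div_eq_mul_inv] at hε
    calc ε * sN < sP * sN⁻¹ * sN := by
          apply mul_lt_mul_of_pos_right hε hsNpos
      _ = sP := by field_simp
  -- now prove PosSemidef
  refine PosSemidef.of_dotProduct_mulVec_nonneg ?_ ?_
  · show (M - ε • Q).IsHermitian
    unfold Matrix.IsHermitian
    rw [conjTranspose_sub, conjTranspose_smul, hM.1, hQ.1]
    simp
  intro x
  simp only [star_trivial, sub_mulVec, smul_mulVec, dotProduct_sub, dotProduct_smul,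
    smul_eq_mul]
  rw [sub_nonneg]
  -- decompose x
  set U := (hM.1.eigenvectorUnitary : Matrix (Fin N) (Fin N) ℝ) with hU
  set eig := hM.1.eigenvalues with heig
  set y := star U *ᵥ x with hy
  have hx : x = U *ᵥ y := aux_decomp hM.1 x
  set z : Fin N → ℝ := fun i => if eig i = 0 then 0 else y i with hz
  set w : Fin N → ℝ := y - z with hw
  set x1 := U *ᵥ z with hx1
  set x0 := U *ᵥ w with hx0
  have hxsum : x = x1 + x0 := by
    rw [hx, hx1, hx0, ← mulVec_add]
    simp [hw]
  -- M *ᵥ x0 = 0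
  have hMx0 : M *ᵥ x0 = 0 := by
    rw [hx0, aux_mulVec hM.1]
    have hzero : (fun i => eig i * w i) = 0 := by
      funext i
      rcases eq_or_ne (eig i) 0 with h | h
      · simp [h]
      · have hwz : w i = 0 := by simp [hw, hz, h]
        simp [hwz]
    rw [hzero, mulVec_zero]
  have hQx0 : Q *ᵥ x0 = 0 := (hker x0).1 hMx0
  -- x ⬝ᵥ Q x = x1 ⬝ᵥ Q x1
  have hQsymm : Qᵀ = Q := by
    have := hQ.1
    rwa [Matrix.IsHermitian, conjTranspose_eq_transpose_of_trivial] at this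
  have hQform : x ⬝ᵥ (Q *ᵥ x) = x1 ⬝ᵥ (Q *ᵥ x1) := by
    rw [hxsum, mulVec_add, hQx0, add_zero, add_dotProduct]
    have h0 : x0 ⬝ᵥ (Q *ᵥ x1) = 0 := by
      rw [dotProduct_mulVec, ← mulVec_transpose, hQsymm, hQx0, zero_dotProduct]
    rw [h0, add_zero]
  -- bound x1 ⬝ᵥ Q x1
  have hQbound : x1 ⬝ᵥ (Q *ᵥ x1) ≤ sN * (x1 ⬝ᵥ x1) := aux_quad_le hQ.1 sN hsNge x1
  -- x1 ⬝ᵥ x1 = z ⬝ᵥ z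
  have hx1norm : x1 ⬝ᵥ x1 = z ⬝ᵥ z := aux_unitary_dot hM.1 z z
  have hznn : 0 ≤ z ⬝ᵥ z := Finset.sum_nonneg fun i _ => mul_self_nonneg _
  -- x ⬝ᵥ M x ≥ sP * (z ⬝ᵥ z)
  have hMform : x ⬝ᵥ (M *ᵥ x) = y ⬝ᵥ (fun i => eig i * y i) := by
    conv_lhs => rw [hx, aux_mulVec hM.1]
    exact aux_unitary_dot hM.1 _ _
  have hMlower : sP * (z ⬝ᵥ z) ≤ x ⬝ᵥ (M *ᵥ x) := by
    rw [hMform]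
    simp only [dotProduct, Finset.mul_sum]
    apply Finset.sum_le_sum
    intro i _
    rcases eq_or_ne (eig i) 0 with h | h
    · simp [hz, h]
    · have h1 : z i = y i := by simp [hz, h]
      have h2 : sP ≤ eig i := hsPle i h
      have hsq : 0 ≤ y i * y i := mul_self_nonneg _
      rw [h1]
      calc sP * (y i * y i) ≤ eig i * (y i * y i) := mul_le_mul_of_nonneg_right h2 hsq
        _ = y i * (eig i * y i) := by ring
  -- conclude
  have hQnn : 0 ≤ x1 ⬝ᵥ (Q *ᵥ x1) := by simpa using hQ.dotProduct_mulVec_nonneg x1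
  calc ε * (x ⬝ᵥ (Q *ᵥ x)) = ε * (x1 ⬝ᵥ (Q *ᵥ x1)) := by rw [hQform]
    _ ≤ ε * (sN * (z ⬝ᵥ z)) := by
        apply mul_le_mul_of_nonneg_left _ hε0.le
        rw [← hx1norm]; exact hQbound
    _ = (ε * sN) * (z ⬝ᵥ z) := by ring
    _ ≤ sP * (z ⬝ᵥ z) := mul_le_mul_of_nonneg_right hεsN.le hznn
    _ ≤ x ⬝ᵥ (M *ᵥ x) := hMlower
end

section
/- Consider the linear error system ẋ = -αB x - Kλ + βu, λ̇ = -γJu, y = Cx, where B is symmetric with μI ≤ B ≤ lI, K, J invertible with KJ = C^T, and α, γ, μ > 0. With z = αBx + Kλ and storage function V = (η/2)z^Tz - (1/γ)x^TKλ + (α/γ)(f(0) - f(x) + ∇f(0)^T x) for f quadratic with Hessian B, if η > 1/(μαγ) then along trajectories V̇ ≤ u^T y - ν u^T u for ν = -‖η(αβB - γC^T) - (β/γ)I‖²/(4(μηα - 1/γ)). -/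
open Matrix

/-- The induced (operator) 2-norm of a square real matrix. -/
noncomputable def opNorm2 {m : ℕ} (A : Matrix (Fin m) (Fin m) ℝ) : ℝ :=
  ‖Matrix.toEuclideanCLM (𝕜 := ℝ) A‖

lemma hasDerivAt_dot {m : ℕ} {f g : ℝ → Fin m → ℝ} {f' g' : Fin m → ℝ} {t : ℝ}
    (hf : HasDerivAt f f' t) (hg : HasDerivAt g g' t) :
    HasDerivAt (fun s => f s ⬝ᵥ g s) (f' ⬝ᵥ g t + f t ⬝ᵥ g') t := by
  simp only [dotProduct]
  rw [← Finset.sum_add_distrib]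
  exact HasDerivAt.fun_sum fun i _ => (hasDerivAt_pi.1 hf i).mul (hasDerivAt_pi.1 hg i)

lemma hasDerivAt_mulVecf {m : ℕ} (A : Matrix (Fin m) (Fin m) ℝ) {f : ℝ → Fin m → ℝ}
    {f' : Fin m → ℝ} {t : ℝ} (hf : HasDerivAt f f' t) :
    HasDerivAt (fun s => A.mulVec (f s)) (A.mulVec f') t := by
  rw [hasDerivAt_pi]
  intro i
  simp only [Matrix.mulVec, dotProduct]
  exact HasDerivAt.fun_sum fun j _ => (hasDerivAt_pi.1 hf j).const_mul (A i j)

lemma symB {m : ℕ} {B : Matrix (Fin m) (Fin m) ℝ} (hB : B.IsSymm) (a b : Fin m → ℝ) :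
    a ⬝ᵥ B.mulVec b = b ⬝ᵥ B.mulVec a := by
  rw [Matrix.dotProduct_mulVec]
  conv_lhs => rw [← hB.eq]
  rw [Matrix.vecMul_transpose, dotProduct_comm]

lemma symC {m : ℕ} (C : Matrix (Fin m) (Fin m) ℝ) (a b : Fin m → ℝ) :
    a ⬝ᵥ Cᵀ.mulVec b = b ⬝ᵥ C.mulVec a := by
  rw [Matrix.dotProduct_mulVec, Matrix.vecMul_transpose, dotProduct_comm]

lemma cs {m : ℕ} (M : Matrix (Fin m) (Fin m) ℝ) (a b : Fin m → ℝ) :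
    a ⬝ᵥ M.mulVec b ≤ opNorm2 M * (Real.sqrt (a ⬝ᵥ a) * Real.sqrt (b ⬝ᵥ b)) := by
  set ae : EuclideanSpace ℝ (Fin m) := (WithLp.equiv 2 _).symm a with hae
  set be : EuclideanSpace ℝ (Fin m) := (WithLp.equiv 2 _).symm b with hbe
  have h1 : a ⬝ᵥ M.mulVec b = inner (𝕜 := ℝ) ae ((Matrix.toEuclideanCLM (𝕜 := ℝ) M) be) := by
    rw [hbe, WithLp.equiv_symm_apply, Matrix.toEuclideanCLM_toLp]
    simp [PiLp.inner_apply, dotProduct, Matrix.toLin'_apply, hae, WithLp.equiv_symm_apply, PiLp.toLp_apply,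
      mul_comm]
  have hna : ‖ae‖ = Real.sqrt (a ⬝ᵥ a) := by
    rw [EuclideanSpace.norm_eq]
    congr 1
    simp [dotProduct, sq, Real.norm_eq_abs, abs_mul_abs_self, hae, hbe,
      WithLp.equiv_symm_apply, PiLp.toLp_apply]
  have hnb : ‖be‖ = Real.sqrt (b ⬝ᵥ b) := by
    rw [EuclideanSpace.norm_eq]
    congr 1
    simp [dotProduct, sq, Real.norm_eq_abs, abs_mul_abs_self, hae, hbe,
      WithLp.equiv_symm_apply, PiLp.toLp_apply]
  calc a ⬝ᵥ M.mulVec b = inner (𝕜 := ℝ) ae ((Matrix.toEuclideanCLM (𝕜 := ℝ) M) be) := h1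
    _ ≤ ‖ae‖ * ‖(Matrix.toEuclideanCLM (𝕜 := ℝ) M) be‖ := real_inner_le_norm _ _
    _ ≤ ‖ae‖ * (opNorm2 M * ‖be‖) := by
        gcongr
        exact ContinuousLinearMap.le_opNorm _ _
    _ = opNorm2 M * (Real.sqrt (a ⬝ᵥ a) * Real.sqrt (b ⬝ᵥ b)) := by rw [hna, hnb]; ring

lemma alg {m : ℕ} (B C : Matrix (Fin m) (Fin m) ℝ) (hBsym : B.IsSymm) (α β γ η : ℝ)
    (hγ : γ ≠ 0) (u zz x : Fin m → ℝ) :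
    η / 2 * (((-(α • B.mulVec zz) + (α*β) • B.mulVec u - γ • Cᵀ.mulVec u) ⬝ᵥ zz)
        + (zz ⬝ᵥ (-(α • B.mulVec zz) + (α*β) • B.mulVec u - γ • Cᵀ.mulVec u)))
      - 1 / γ * (((-zz + β • u) ⬝ᵥ (zz - α • B.mulVec x)) + (x ⬝ᵥ (-(γ • Cᵀ.mulVec u))))
      - α / (2 * γ) * (((-zz + β • u) ⬝ᵥ B.mulVec x) + (x ⬝ᵥ B.mulVec (-zz + β • u)))
    = u ⬝ᵥ C.mulVec x - η*α*(zz ⬝ᵥ B.mulVec zz) + (1/γ)*(zz ⬝ᵥ zz)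
      + zz ⬝ᵥ (η • ((α * β) • B - γ • Cᵀ)
          - (β / γ) • (1 : Matrix (Fin m) (Fin m) ℝ)).mulVec u := by
  simp only [Matrix.sub_mulVec, Matrix.smul_mulVec, Matrix.one_mulVec,
    Matrix.mulVec_add, Matrix.mulVec_sub, Matrix.mulVec_smul, Matrix.mulVec_neg,
    dotProduct_add, add_dotProduct, dotProduct_sub, sub_dotProduct,
    dotProduct_smul, smul_dotProduct, dotProduct_neg, neg_dotProduct, smul_eq_mul]
  rw [dotProduct_comm (B.mulVec zz) zz, dotProduct_comm (B.mulVec u) zz,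
    dotProduct_comm (Cᵀ.mulVec u) zz, dotProduct_comm u zz, symB hBsym u x, symC C x u,
    symB hBsym x zz]
  field_simp
  ring

set_option maxHeartbeats 1000000 in
/-- The linear error system ẋ = -αBx - Kλ + βu, λ̇ = -γJu, y = Cx with
μI ≤ B ≤ lI, KJ = Cᵀ, storage function V (with z = αBx + Kλ and f(x) = ½xᵀBx so that
(α/γ)(f(0) - f(x) + ∇f(0)ᵀx) = -(α/(2γ)) xᵀBx), is IFP(ν): if η > 1/(μαγ) then along
trajectories V̇ ≤ uᵀy - ν uᵀu with ν = -‖η(αβB - γCᵀ) - (β/γ)I‖²/(4(μηα - 1/γ)). -/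
theorem stmt_17 (m : ℕ) (B K J C : Matrix (Fin m) (Fin m) ℝ) (μ l α β γ η ν : ℝ)
    (hBsym : B.IsSymm)
    (hμB : (B - μ • (1 : Matrix (Fin m) (Fin m) ℝ)).PosSemidef)
    (hBl : (l • (1 : Matrix (Fin m) (Fin m) ℝ) - B).PosSemidef)
    (hK : IsUnit K) (hJ : IsUnit J) (hKJ : K * J = Cᵀ)
    (hμ : 0 < μ) (hα : 0 < α) (hγ : 0 < γ) (hη : 1 / (μ * α * γ) < η)
    (hν : ν = -(opNorm2 (η • ((α * β) • B - γ • Cᵀ)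
        - (β / γ) • (1 : Matrix (Fin m) (Fin m) ℝ)) ^ 2) / (4 * (μ * η * α - 1 / γ)))
    (xf lamf uf : ℝ → (Fin m → ℝ))
    (hode1 : ∀ t, HasDerivAt xf
      (-(α • B.mulVec (xf t)) - K.mulVec (lamf t) + β • uf t) t)
    (hode2 : ∀ t, HasDerivAt lamf (-(γ • J.mulVec (uf t))) t)
    (z : ℝ → Fin m → ℝ)
    (hz : ∀ t, z t = α • B.mulVec (xf t) + K.mulVec (lamf t))
    (V : ℝ → ℝ)
    (hV : ∀ t, V t = η / 2 * (z t ⬝ᵥ z t) - 1 / γ * (xf t ⬝ᵥ K.mulVec (lamf t))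
      - α / (2 * γ) * (xf t ⬝ᵥ B.mulVec (xf t))) :
    ∀ t, ∃ Vd : ℝ, HasDerivAt V Vd t ∧
      Vd ≤ uf t ⬝ᵥ C.mulVec (xf t) - ν * (uf t ⬝ᵥ uf t) := by
  intro t
  have hVfun : V = fun s => η / 2 * ((α • B.mulVec (xf s) + K.mulVec (lamf s)) ⬝ᵥ
      (α • B.mulVec (xf s) + K.mulVec (lamf s))) - 1 / γ * (xf s ⬝ᵥ K.mulVec (lamf s))
      - α / (2 * γ) * (xf s ⬝ᵥ B.mulVec (xf s)) := by
    funext s; rw [hV s, hz s]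
  set N : Matrix (Fin m) (Fin m) ℝ := η • ((α * β) • B - γ • Cᵀ)
      - (β / γ) • (1 : Matrix (Fin m) (Fin m) ℝ) with hNdef
  set x : Fin m → ℝ := xf t with hxdef
  set lam : Fin m → ℝ := lamf t with hlamdef
  set u : Fin m → ℝ := uf t with hudef
  set x' : Fin m → ℝ := -(α • B.mulVec x) - K.mulVec lam + β • u with hx'
  set l' : Fin m → ℝ := -(γ • J.mulVec u) with hl'
  set z' : Fin m → ℝ := α • B.mulVec x' + K.mulVec l' with hz'
  set zz : Fin m → ℝ := α • B.mulVec x + K.mulVec lam with hzzdef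
  have hdx : HasDerivAt xf x' t := hode1 t
  have hdl : HasDerivAt lamf l' t := hode2 t
  have hdKl : HasDerivAt (fun s => K.mulVec (lamf s)) (K.mulVec l') t := hasDerivAt_mulVecf K hdl
  have hdzfun : HasDerivAt (fun s => α • B.mulVec (xf s) + K.mulVec (lamf s)) z' t :=
    ((hasDerivAt_mulVecf B hdx).const_smul α).add hdKl
  set Vd : ℝ := η / 2 * (z' ⬝ᵥ zz + zz ⬝ᵥ z')
      - 1 / γ * (x' ⬝ᵥ K.mulVec lam + x ⬝ᵥ K.mulVec l')
      - α / (2 * γ) * (x' ⬝ᵥ B.mulVec x + x ⬝ᵥ B.mulVec x') with hVddef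
  have hdV : HasDerivAt V Vd t := by
    rw [hVfun]
    exact (((hasDerivAt_dot hdzfun hdzfun).const_mul (η/2)).sub
      ((hasDerivAt_dot hdx hdKl).const_mul (1/γ))).sub
      ((hasDerivAt_dot hdx (hasDerivAt_mulVecf B hdx)).const_mul (α/(2*γ)))
  refine ⟨Vd, hdV, ?_⟩
  -- rewrite pieces
  have hKlam : K.mulVec lam = zz - α • B.mulVec x := by rw [hzzdef]; abel
  have hKl' : K.mulVec l' = -(γ • Cᵀ.mulVec u) := by
    rw [hl', Matrix.mulVec_neg, Matrix.mulVec_smul, Matrix.mulVec_mulVec, hKJ]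
  have hx'2 : x' = -zz + β • u := by rw [hx', hzzdef]; abel
  have hz'2 : z' = -(α • B.mulVec zz) + (α*β) • B.mulVec u - γ • Cᵀ.mulVec u := by
    rw [hz', hx'2, hKl', Matrix.mulVec_add, Matrix.mulVec_neg, Matrix.mulVec_smul]
    rw [smul_add, smul_neg, smul_smul]
    abel
  have hVdeq : Vd = u ⬝ᵥ C.mulVec x - η*α*(zz ⬝ᵥ B.mulVec zz) + (1/γ)*(zz ⬝ᵥ zz)
      + zz ⬝ᵥ N.mulVec u := by
    rw [hVddef, hz'2, hKl', hKlam, hx'2, hNdef]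
    exact alg B C hBsym α β γ η (ne_of_gt hγ) u zz x
  -- inequalities
  have hγ' : γ ≠ 0 := ne_of_gt hγ
  have hμαγ : 0 < μ * α * γ := by positivity
  have hη0 : 0 < η := lt_trans (by positivity) hη
  have hc : 0 < μ * η * α - 1 / γ := by
    rw [sub_pos, div_lt_iff₀ hγ]
    rw [div_lt_iff₀ hμαγ] at hη
    nlinarith [hη]
  have hzzB : μ * (zz ⬝ᵥ zz) ≤ zz ⬝ᵥ B.mulVec zz := by
    have h0 := hμB.dotProduct_mulVec_nonneg zz
    simp only [star_trivial, Matrix.sub_mulVec, Matrix.smul_mulVec, Matrix.one_mulVec,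
      dotProduct_sub, dotProduct_smul, smul_eq_mul] at h0
    linarith
  have hdd : 0 ≤ zz ⬝ᵥ zz := Finset.sum_nonneg fun i _ => mul_self_nonneg _
  have hdu : 0 ≤ u ⬝ᵥ u := Finset.sum_nonneg fun i _ => mul_self_nonneg _
  set a : ℝ := Real.sqrt (zz ⬝ᵥ zz) with hadef
  set b : ℝ := Real.sqrt (u ⬝ᵥ u) with hbdef
  have ha2 : zz ⬝ᵥ zz = a ^ 2 := (Real.sq_sqrt hdd).symm
  have hb2 : u ⬝ᵥ u = b ^ 2 := (Real.sq_sqrt hdu).symm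
  have hcs := cs N zz u
  rw [← hadef, ← hbdef] at hcs
  have hN0 : (0:ℝ) ≤ opNorm2 N := norm_nonneg _
  have key : -(μ * η * α - 1/γ) * a ^ 2 + opNorm2 N * (a * b)
      ≤ opNorm2 N ^ 2 / (4 * (μ * η * α - 1/γ)) * b ^ 2 := by
    rw [div_mul_eq_mul_div, le_div_iff₀ (by positivity)]
    nlinarith [sq_nonneg (2 * (μ * η * α - 1/γ) * a - opNorm2 N * b)]
  have hνeq : -ν * (u ⬝ᵥ u) = opNorm2 N ^ 2 / (4 * (μ * η * α - 1/γ)) * b ^ 2 := by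
    rw [hν, hb2]; ring
  have hBz : η * α * (μ * (zz ⬝ᵥ zz)) ≤ η * α * (zz ⬝ᵥ B.mulVec zz) :=
    mul_le_mul_of_nonneg_left hzzB (by positivity)
  rw [hVdeq]
  rw [ha2] at hBz ⊢
  linarith [hcs, key, hνeq, hBz]
end
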